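/- Let E be a vector bundle on a disk D (formal spectrum of Z_p[[t]] or the complex disk) with logarithmic connection ∇ whose residue N at t = 0 is nilpotent. Then the three spaces of: horizontal sections of E over the punctured disk, horizontal sections of E over D, and the kernel of N on the fiber E_0, are canonically isomorphic via restriction and evaluation at 0. -/

import Mathlib

open PowerSeries

/-- The derivation `δ = t d/dt` on formal power series. -/
noncomputable def seriesDelta {R : Type*} [CommRing R] (f : PowerSeries R) : PowerSeries R :=
  PowerSeries.mk fun m => (m : R) * PowerSeries.coeff (R := R) m f

/-- The derivation `δ = t d/dt` on formal Laurent series. -/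
noncomputable def laurentDelta {K : Type*} [Field K] (f : LaurentSeries K) : LaurentSeries K where
  coeff := fun m => (m : K) * f.coeff m
  isPWO_support' := f.isPWO_support'.mono (by
    intro m hm
    simp only [Function.mem_support] at hm ⊢
    intro h0
    exact hm (by rw [h0, mul_zero]))

/-!
Comparing coefficients of `t ^ m` in `∇ s = 0`, where `∇ = δ + A` and `A = ∑ₖ Aₖ tᵏ`, gives
`(m + N) sₘ = - ∑_{k ≥ 1} Aₖ s_{m-k}` with `N = A₀`. Since `N` is nilpotent and `K` has
characteristic zero, `m + N` is invertible for every integer `m ≠ 0`. Looking at the lowest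
coefficient, a horizontal Laurent section therefore has no polar part; and a horizontal power series
section is determined by `s₀`, which lies in `ker N`, while conversely every `s₀ ∈ ker N` extends
to a horizontal section by solving the recursion.
-/

open Matrix LaurentSeries

theorem IsNilpotent.isUnit_smul_one_add {K R : Type*} [Field K] [Ring R] [Algebra K R]
    {N : R} (hN : IsNilpotent N) {c : K} (hc : c ≠ 0) : IsUnit (c • (1 : R) + N) := by
  refine hN.isUnit_add_left_of_commute ?_ ((Commute.one_right N).smul_right c)
  rw [← Algebra.algebraMap_eq_smul_one]
  exact hc.isUnit.map _

@[simp]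
theorem coeff_seriesDelta {R : Type*} [CommRing R] (f : R⟦X⟧) (m : ℕ) :
    coeff m (seriesDelta f) = m * coeff m f :=
  coeff_mk _ _

@[simp]
theorem coeff_laurentDelta {K : Type*} [Field K] (f : K⸨X⸩) (m : ℤ) :
    (laurentDelta f).coeff m = m * f.coeff m :=
  rfl

theorem laurentDelta_ofPowerSeries {K : Type*} [Field K] (f : K⟦X⟧) :
    laurentDelta (HahnSeries.ofPowerSeries ℤ K f) =
      HahnSeries.ofPowerSeries ℤ K (seriesDelta f) := by
  ext n
  rw [coeff_laurentDelta, PowerSeries.coeff_coe, PowerSeries.coeff_coe]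
  split_ifs with hn
  · rw [mul_zero]
  · rw [coeff_seriesDelta, ← Int.cast_natCast, Int.natAbs_of_nonneg (not_lt.mp hn)]

theorem ofPowerSeries_mk_coeff {R : Type*} [Semiring R] {f : R⸨X⸩}
    (hf : ∀ n < 0, f.coeff n = 0) : HahnSeries.ofPowerSeries ℤ R (mk fun n => f.coeff n) = f := by
  ext n
  rw [PowerSeries.coeff_coe]
  split_ifs with hn
  · exact (hf n hn).symm
  · rw [coeff_mk, Int.natAbs_of_nonneg (not_lt.mp hn)]

theorem coeff_ofPowerSeries_mul_of_forall_lt {R : Type*} [Semiring R] (a : R⟦X⟧) {s : R⸨X⸩}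
    {m : ℤ} (hs : ∀ l < m, s.coeff l = 0) :
    (HahnSeries.ofPowerSeries ℤ R a * s).coeff m = constantCoeff a * s.coeff m := by
  rw [HahnSeries.coeff_mul, Finset.sum_eq_single ((0 : ℤ), m)]
  · simpa using congrArg (· * s.coeff m) (HahnSeries.ofPowerSeries_apply_coeff a 0)
  · rintro ⟨k, l⟩ hkl hne
    obtain ⟨hk, hl, rfl⟩ := Finset.mem_antidiagonal.mp hkl
    have hk0 : 0 ≤ k := by
      by_contra! hk'
      exact hk (by rw [PowerSeries.coeff_coe, if_pos hk'])
    have hkl' : k = 0 := by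
      by_contra hk'
      exact hl (hs l (by omega))
    simp_all
  · intro h
    by_contra hne
    exact h (Finset.mem_antidiagonal.mpr
      ⟨(HahnSeries.mem_support _ _).mpr (left_ne_zero_of_mul hne),
        (HahnSeries.mem_support _ _).mpr (right_ne_zero_of_mul hne), zero_add m⟩)

section Connection

variable {K ι : Type*} [Field K] [Fintype ι] (A : Matrix ι ι K⟦X⟧)

noncomputable def nabla (t : ι → K⟦X⟧) : ι → K⟦X⟧ :=
  fun i => seriesDelta (t i) + ∑ j, A i j * t j

noncomputable def laurentNabla (s : ι → K⸨X⸩) : ι → K⸨X⸩ :=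
  fun i => laurentDelta (s i) + ∑ j, HahnSeries.ofPowerSeries ℤ K (A i j) * s j

theorem nabla_sub (t t' : ι → K⟦X⟧) : nabla A (t - t') = nabla A t - nabla A t' := by
  funext i
  ext m
  simp only [nabla, Pi.sub_apply, map_add, map_sub, map_sum, coeff_seriesDelta, mul_sub,
    Finset.sum_sub_distrib]
  ring

theorem laurentNabla_ofPowerSeries (t : ι → K⟦X⟧) :
    laurentNabla A (fun i => HahnSeries.ofPowerSeries ℤ K (t i)) =
      fun i => HahnSeries.ofPowerSeries ℤ K (nabla A t i) := by
  funext i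
  simp only [laurentNabla, nabla, laurentDelta_ofPowerSeries, map_add, map_sum, map_mul]

theorem coeff_nabla (t : ι → K⟦X⟧) (m : ℕ) :
    (fun i => coeff m (nabla A t i)) = (m : K) • (fun i => coeff m (t i)) +
      ∑ k ∈ Finset.range (m + 1), A.map (coeff k) *ᵥ fun i => coeff (m - k) (t i) := by
  funext i
  simp only [nabla, map_add, map_sum, coeff_mul, coeff_seriesDelta,
    Finset.Nat.sum_antidiagonal_eq_sum_range_succ_mk, Pi.add_apply, Pi.smul_apply, smul_eq_mul,
    Finset.sum_apply, mulVec, dotProduct, map_apply]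
  rw [Finset.sum_comm]

variable [DecidableEq ι]

theorem coeff_laurentNabla_of_forall_lt {s : ι → K⸨X⸩} {m : ℤ}
    (hs : ∀ i, ∀ l < m, (s i).coeff l = 0) :
    (fun i => (laurentNabla A s i).coeff m) =
      ((m : K) • 1 + A.map constantCoeff) *ᵥ fun i => (s i).coeff m := by
  rw [add_mulVec, smul_mulVec, one_mulVec]
  funext i
  simp only [laurentNabla, HahnSeries.coeff_add, HahnSeries.coeff_sum, coeff_laurentDelta,
    coeff_ofPowerSeries_mul_of_forall_lt _ (hs _), Pi.add_apply, Pi.smul_apply, smul_eq_mul,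
    mulVec, dotProduct, map_apply]

end Connection

section Residue

variable {K ι : Type*} [Field K] [Fintype ι] [DecidableEq ι]

-- `Ring.inverse` is a genuine inverse here once the residue is nilpotent.
noncomputable def horizontalCoeff (A : Matrix ι ι K⟦X⟧) (v : ι → K) : ℕ → ι → K
  | 0 => v
  | n + 1 => Ring.inverse (((n + 1 : ℕ) : K) • 1 + A.map constantCoeff) *ᵥ
      -∑ k ∈ Finset.range (n + 1), A.map (coeff (k + 1)) *ᵥ horizontalCoeff A v (n - k)
  decreasing_by omega

variable [CharZero K] {A : Matrix ι ι K⟦X⟧} (hN : IsNilpotent (A.map constantCoeff))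
include hN

theorem coeff_eq_zero_of_laurentNabla_eq_zero {s : ι → K⸨X⸩} (hs : laurentNabla A s = 0)
    {m : ℤ} (hm : m ≠ 0) (hlow : ∀ i, ∀ l < m, (s i).coeff l = 0) :
    (fun i => (s i).coeff m) = 0 := by
  apply mulVec_injective_iff_isUnit.mpr (hN.isUnit_smul_one_add (Int.cast_ne_zero.mpr hm : (m : K) ≠ 0))
  rw [← coeff_laurentNabla_of_forall_lt A hlow, hs, mulVec_zero]
  rfl

theorem forall_lt_coeff_eq_zero_of_laurentNabla_eq_zero {s : ι → K⸨X⸩}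
    (hs : laurentNabla A s = 0) {a b : ℤ} (h0 : 0 ∉ Set.Ico a b)
    (ha : ∀ i, ∀ l < a, (s i).coeff l = 0) : ∀ i, ∀ l < b, (s i).coeff l = 0 := by
  rcases lt_or_ge b a with hba | hab
  · exact fun i l hl => ha i l (hl.trans hba)
  induction b, hab using Int.leInduction with
  | base => exact ha
  | succ b hab ih =>
    have hlow := ih (fun h => h0 ⟨h.1, h.2.trans (lt_add_one b)⟩)
    have hb : b ≠ 0 := by
      rintro rfl
      exact h0 ⟨hab, zero_lt_one⟩
    intro i l hl
    rcases (Int.lt_add_one_iff.mp hl).lt_or_eq with hl | rfl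
    · exact hlow i l hl
    · exact congrFun (coeff_eq_zero_of_laurentNabla_eq_zero hN hs hb hlow) i

theorem exists_ofPowerSeries_eq_of_laurentNabla_eq_zero {s : ι → K⸨X⸩}
    (hs : laurentNabla A s = 0) :
    ∃ t, nabla A t = 0 ∧ ∀ i, HahnSeries.ofPowerSeries ℤ K (t i) = s i := by
  obtain ⟨a, ha⟩ := Finite.exists_ge fun i => (s i).order
  have hneg : ∀ i, ∀ l < 0, (s i).coeff l = 0 :=
    forall_lt_coeff_eq_zero_of_laurentNabla_eq_zero hN hs (a := min a 0) (b := 0) (by simp)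
      fun i l hl => HahnSeries.coeff_eq_zero_of_lt_order
        ((hl.trans_le (min_le_left a 0)).trans_le (ha i))
  set t : ι → K⟦X⟧ := fun i => mk fun n => (s i).coeff n
  have hts : (fun i => HahnSeries.ofPowerSeries ℤ K (t i)) = s :=
    funext fun i => ofPowerSeries_mk_coeff (hneg i)
  refine ⟨t, funext fun i => HahnSeries.ofPowerSeries_injective (Γ := ℤ) ?_, congrFun hts⟩
  rw [Pi.zero_apply, map_zero, ← congrFun (laurentNabla_ofPowerSeries A t) i, hts, hs, Pi.zero_apply]

theorem eq_of_nabla_eq_zero_of_constantCoeff_eq {t t' : ι → K⟦X⟧} (ht : nabla A t = 0)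
    (ht' : nabla A t' = 0) (h0 : ∀ i, constantCoeff (t i) = constantCoeff (t' i)) : t = t' := by
  set d := t - t'
  have hd : laurentNabla A (fun i => HahnSeries.ofPowerSeries ℤ K (d i)) = 0 := by
    rw [laurentNabla_ofPowerSeries, nabla_sub, ht, ht', sub_zero]
    funext i
    exact map_zero _
  have hd1 : ∀ i, ∀ l < 1, (HahnSeries.ofPowerSeries ℤ K (d i)).coeff l = 0 := by
    intro i l hl
    rw [PowerSeries.coeff_coe]
    split_ifs with hl0
    · rfl
    · obtain rfl : l = 0 := by omega
      simp [d, coeff_zero_eq_constantCoeff, h0]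
  refine sub_eq_zero.mp (funext fun i => ext fun n => ?_)
  simpa [d] using forall_lt_coeff_eq_zero_of_laurentNabla_eq_zero hN hd (a := 1) (b := n + 1)
    (by simp) hd1 i n (by omega)

theorem smul_one_add_mulVec_horizontalCoeff_succ (v : ι → K) (n : ℕ) :
    (((n + 1 : ℕ) : K) • 1 + A.map constantCoeff) *ᵥ horizontalCoeff A v (n + 1) =
      -∑ k ∈ Finset.range (n + 1), A.map (coeff (k + 1)) *ᵥ horizontalCoeff A v (n - k) := by
  rw [horizontalCoeff, mulVec_mulVec,
    Ring.mul_inverse_cancel _ (hN.isUnit_smul_one_add (Nat.cast_ne_zero.mpr n.succ_ne_zero)),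
    one_mulVec]

theorem nabla_mk_horizontalCoeff_eq_zero {v : ι → K} (hv : A.map constantCoeff *ᵥ v = 0) :
    nabla A (fun i => mk fun n => horizontalCoeff A v n i) = 0 := by
  suffices ∀ m, (fun i => coeff m (nabla A (fun i => mk fun n => horizontalCoeff A v n i) i)) = 0
    from funext fun i => ext fun m => congrFun (this m) i
  intro m
  simp only [coeff_nabla, coeff_mk]
  cases m with
  | zero => simpa [horizontalCoeff, coeff_zero_eq_constantCoeff] using hv
  | succ n =>
    have h := smul_one_add_mulVec_horizontalCoeff_succ hN v n
    rw [add_mulVec, smul_mulVec, one_mulVec, eq_neg_iff_add_eq_zero] at h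
    rw [Finset.sum_range_succ', Nat.sub_zero, coeff_zero_eq_constantCoeff, ← h]
    simp only [Nat.add_sub_add_right]
    abel

theorem exists_nabla_eq_zero_of_mulVec_eq_zero {v : ι → K}
    (hv : A.map constantCoeff *ᵥ v = 0) :
    ∃ t, nabla A t = 0 ∧ ∀ i, constantCoeff (t i) = v i :=
  ⟨_, nabla_mk_horizontalCoeff_eq_zero hN hv, fun i => by rw [constantCoeff_mk, horizontalCoeff]⟩

end Residue

/-- Formal version of the nilpotent-residue lemma.  Let `E = K[[t]]^r` carry the logarithmic
connection `∇ = δ + A` (with `A` a matrix of power series and `δ = t d/dt`) whose residue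
`N = A(0)` is nilpotent.  Then restriction identifies horizontal sections over the disk with
horizontal sections over the punctured disk (Laurent coefficients), and evaluation at `t = 0`
identifies horizontal sections with the kernel of `N` on the fiber. -/
theorem stmt12 (K : Type*) [Field K] [CharZero K] (r : ℕ)
    (A : Matrix (Fin r) (Fin r) (PowerSeries K))
    (hN : IsNilpotent (A.map (PowerSeries.constantCoeff (R := K)))) :
    (∀ s : Fin r → LaurentSeries K,
      (∀ i, laurentDelta (s i) + ∑ j, (HahnSeries.ofPowerSeries ℤ K (A i j)) * s j = 0) →
      ∃! t : Fin r → PowerSeries K,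
        (∀ i, seriesDelta (t i) + ∑ j, A i j * t j = 0) ∧
        ∀ i, HahnSeries.ofPowerSeries ℤ K (t i) = s i) ∧
    (∀ v : Fin r → K,
      (∀ i, ∑ j, PowerSeries.constantCoeff (R := K) (A i j) * v j = 0) →
      ∃! t : Fin r → PowerSeries K,
        (∀ i, seriesDelta (t i) + ∑ j, A i j * t j = 0) ∧
        ∀ i, PowerSeries.constantCoeff (R := K) (t i) = v i) := by
  constructor
  · intro s hs
    obtain ⟨t, ht, hts⟩ := exists_ofPowerSeries_eq_of_laurentNabla_eq_zero hN (funext hs)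
    refine ⟨t, ⟨congrFun ht, hts⟩, fun t' ht' => funext fun i => ?_⟩
    exact HahnSeries.ofPowerSeries_injective ((ht'.2 i).trans (hts i).symm)
  · intro v hv
    obtain ⟨t, ht, htv⟩ := exists_nabla_eq_zero_of_mulVec_eq_zero hN (funext hv)
    refine ⟨t, ⟨congrFun ht, htv⟩, fun t' ht' => ?_⟩
    exact eq_of_nabla_eq_zero_of_constantCoeff_eq hN (funext ht'.1) ht
      fun i => (ht'.2 i).trans (htv i).symm
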